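/- arXiv:2011.04889 — 2 statements merged into one kernel-verified Lean document; each statement's English description precedes it below -/
import Mathlib

section
/- Let h: [0,1] → ℝ be of bounded variation with h(0)=0, ĥ its upper semicontinuous modification, and h* the concave envelope of h. Then the set {t ∈ [0,1] : ĥ(t) ≠ h*(t)} is a union of disjoint open intervals, and h* is linear (affine) on each such interval. -/
/-!
Since `h` has bounded variation, its one-sided limits exist, so `ĥ` is upper semicontinuous on
`(0,1)`; and `h*` is concave, hence continuous there, with `ĥ ≤ h*`. So `{ĥ < h*}` is open, and it
misses the endpoints because `h*(0) = 0 = h(0)` and `h*(1) = h(1)`; its connected components are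
open intervals. On a compact `[x,z]` inside a component let `ℓ` be the chord of `h*`. The upper
semicontinuous `ĥ - ℓ` attains its maximum `c` at some `t`; if `c > 0`, then `min(h*, ℓ + c)` is a
concave majorant of `h`, whence `h*(t) ≤ ℓ(t) + c = ĥ(t) < h*(t)`. So `h* ≤ ℓ` on `[x,z]`, while
concavity gives `h* ≥ ℓ` there: `h*` is affine on every such `[x,z]`, hence on the component.
-/

open MeasureTheory Set Classical

/-- Left-quantile function of a distribution on ℝ. -/
noncomputable def leftQuantile (μ : Measure ℝ) (p : ℝ) : ℝ :=
  sInf {x : ℝ | p ≤ (μ (Iic x)).toReal}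

/-- The uniform distribution on [0,1]. -/
noncomputable def unif01 : Measure ℝ := volume.restrict (Icc (0:ℝ) 1)

/-- The C-concentration of a distribution: the law of
`F⁻¹(U)·1_{U∉C} + E[F⁻¹(U) | U∈C]·1_{U∈C}` with `U` uniform on [0,1]. -/

noncomputable def concentration (μ : Measure ℝ) (C : Set ℝ) : Measure ℝ :=
  Measure.map
    (fun u => if u ∈ C then (∫ t in C, leftQuantile μ t) / (volume C).toReal
      else leftQuantile μ u) unif01

/-- The concave envelope of `h` on `[0,1]`: pointwise infimum of all concave functions `g`
on `[0,1]` with `g 0 = 0` dominating `h`. -/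
noncomputable def concaveEnvelope (h : ℝ → ℝ) : ℝ → ℝ := fun t =>
  sInf {y : ℝ | ∃ g : ℝ → ℝ, ConcaveOn ℝ (Icc 0 1) g ∧ g 0 = 0 ∧
      (∀ s ∈ Icc (0:ℝ) 1, h s ≤ g s) ∧ y = g t}

/-- The convex envelope of `h` on `[0,1]`: pointwise supremum of all convex functions `g`
on `[0,1]` with `g 0 = 0` dominated by `h`. -/
noncomputable def convexEnvelope (h : ℝ → ℝ) : ℝ → ℝ := fun t =>
  sSup {y : ℝ | ∃ g : ℝ → ℝ, ConvexOn ℝ (Icc 0 1) g ∧ g 0 = 0 ∧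
      (∀ s ∈ Icc (0:ℝ) 1, g s ≤ h s) ∧ y = g t}

/-- The upper semicontinuous modification `ĥ` of `h`: at interior points, the maximum of
`h(t⁻)`, `h(t⁺)` and `h(t)`; no modification at `0` and `1`. -/
noncomputable def uscMod (h : ℝ → ℝ) : ℝ → ℝ := fun t =>
  if t ∈ Ioo (0:ℝ) 1 then max (max (Function.leftLim h t) (Function.rightLim h t)) (h t)
  else h t


open Filter Topology Function

theorem ConcaveOn.update_of_mem_extremePoints {E : Type*} [AddCommGroup E] [Module ℝ E]
    {s : Set E} {g : E → ℝ} {p : E} {v : ℝ} (hg : ConcaveOn ℝ s g)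
    (hp : p ∈ s.extremePoints ℝ) (hv : v ≤ g p) : ConcaveOn ℝ s (update g p v) := by
  have hle : ∀ x, update g p v x ≤ g x := fun x => by
    rcases eq_or_ne x p with rfl | hx
    · simpa using hv
    · simp [hx]
  refine concaveOn_iff_forall_pos.2 ⟨hg.1, fun x hx y hy a b ha hb hab => ?_⟩
  by_cases hxy : a • x + b • y = p
  · obtain ⟨rfl, rfl⟩ := (mem_extremePoints.1 hp).2 x hx y hy ⟨a, b, ha, hb, hab, hxy⟩
    simp only [hxy, update_self, smul_eq_mul, ← add_mul, hab, one_mul, le_refl]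
  · calc a • update g p v x + b • update g p v y ≤ a • g x + b • g y := by
          gcongr <;> apply hle
      _ ≤ g (a • x + b • y) := hg.2 hx hy ha.le hb.le hab
      _ = update g p v (a • x + b • y) := (update_of_ne hxy ..).symm

theorem ConcaveOn.add_slope_mul_sub_le {f : ℝ → ℝ} {s : Set ℝ} (hf : ConcaveOn ℝ s f) {x z y : ℝ}
    (hx : x ∈ s) (hz : z ∈ s) (hxz : x < z) (hy : y ∈ Icc x z) :
    f x + slope f x z * (y - x) ≤ f y := by
  rcases hy.1.eq_or_lt with rfl | hxy
  · simp
  have hslope : slope f x z ≤ slope f x y :=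
    hf.slope_anti hx ⟨hf.1.ordConnected.out hx hz ⟨hxy.le, hy.2⟩, hxy.ne'⟩ ⟨hz, hxz.ne'⟩ hy.2
  have := sub_smul_slope f x y
  rw [smul_eq_mul, vsub_eq_sub] at this
  nlinarith

theorem ConcaveOn.le_add_slope_mul_sub {f : ℝ → ℝ} {s : Set ℝ} (hf : ConcaveOn ℝ s f) {x z y : ℝ}
    (hx : x ∈ s) (hz : z ∈ s) (hxz : x < z) (hy : y ∈ s) (hyxz : y ∉ Ioo x z) :
    f y ≤ f x + slope f x z * (y - x) := by
  have hfy := sub_smul_slope f x y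
  rw [smul_eq_mul, vsub_eq_sub] at hfy
  rcases lt_trichotomy y x with hyx | rfl | hxy
  · have : slope f x z ≤ slope f x y :=
      hf.slope_anti hx ⟨hy, hyx.ne⟩ ⟨hz, hxz.ne'⟩ (hyx.trans hxz).le
    nlinarith
  · simp
  · have hzy : z ≤ y := not_lt.1 fun hyz => hyxz ⟨hxy, hyz⟩
    have : slope f x y ≤ slope f x z := hf.slope_anti hx ⟨hz, hxz.ne'⟩ ⟨hy, hxy.ne'⟩ hzy
    nlinarith

theorem BoundedVariationOn.tendsto_leftLim_of_mem_nhds {f : ℝ → ℝ} {s : Set ℝ} {x : ℝ}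
    (hf : BoundedVariationOn f s) (hs : s ∈ 𝓝 x) :
    Tendsto f (𝓝[<] x) (𝓝 (Function.leftLim f x)) := by
  obtain ⟨l, hl⟩ := hf.exists_tendsto_left x
  rw [nhdsWithin_inter_of_mem (mem_nhdsWithin_of_mem_nhds hs)] at hl
  exact tendsto_leftLim_of_tendsto ⟨l, hl⟩

theorem BoundedVariationOn.tendsto_rightLim_of_mem_nhds {f : ℝ → ℝ} {s : Set ℝ} {x : ℝ}
    (hf : BoundedVariationOn f s) (hs : s ∈ 𝓝 x) :
    Tendsto f (𝓝[>] x) (𝓝 (Function.rightLim f x)) := by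
  obtain ⟨l, hl⟩ := hf.exists_tendsto_right x
  rw [nhdsWithin_inter_of_mem (mem_nhdsWithin_of_mem_nhds hs)] at hl
  exact tendsto_rightLim_of_tendsto ⟨l, hl⟩

theorem IsOpen.eq_Ioo_csInf_csSup {C : Set ℝ} (hC : IsOpen C) (hpc : IsPreconnected C)
    (hne : C.Nonempty) (hb : BddBelow C) (ha : BddAbove C) :
    C = Ioo (sInf C) (sSup C) :=
  ((interior_maximal (subset_Icc_csInf_csSup hb ha) hC).trans_eq interior_Icc).antisymm
    (IsConnected.Ioo_csInf_csSup_subset ⟨hne, hpc⟩ hb ha)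

theorem IsOpen.exists_eq_sUnion_pairwiseDisjoint_Ioo {U : Set ℝ} (hU : IsOpen U)
    (hb : BddBelow U) (ha : BddAbove U) :
    ∃ S : Set (Set ℝ), (∀ A ∈ S, ∃ a b : ℝ, a < b ∧ A = Ioo a b) ∧
      S.PairwiseDisjoint id ∧ U = ⋃₀ S := by
  refine ⟨range fun t : U => connectedComponentIn U t, ?_, ?_, ?_⟩
  · rintro _ ⟨⟨t, ht⟩, rfl⟩
    have hsub := connectedComponentIn_subset U t
    have hne : (connectedComponentIn U t).Nonempty := ⟨t, mem_connectedComponentIn ht⟩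
    have heq := hU.connectedComponentIn.eq_Ioo_csInf_csSup isPreconnected_connectedComponentIn
      hne (hb.mono hsub) (ha.mono hsub)
    obtain ⟨y, hy⟩ := hne
    have hy' : y ∈ Ioo _ _ := heq ▸ hy
    exact ⟨_, _, hy'.1.trans hy'.2, heq⟩
  · rintro _ ⟨s, rfl⟩ _ ⟨t, rfl⟩ hst
    refine disjoint_left.2 fun y hys hyt => hst ?_
    exact (connectedComponentIn_eq hys).trans (connectedComponentIn_eq hyt).symm
  · refine (subset_antisymm (fun t ht => ?_) (sUnion_subset ?_))
    · exact ⟨_, ⟨⟨t, ht⟩, rfl⟩, mem_connectedComponentIn ht⟩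
    · rintro _ ⟨t, rfl⟩
      exact connectedComponentIn_subset U t

theorem exists_eq_affine_on_Ioo_of_forall_Icc {f : ℝ → ℝ} {a b : ℝ} (hab : a < b)
    (hf : ∀ x z, a < x → x < z → z < b → ∃ c d : ℝ, ∀ t ∈ Icc x z, f t = c * t + d) :
    ∃ c d : ℝ, ∀ t ∈ Ioo a b, f t = c * t + d := by
  set p := (2 * a + b) / 3
  set q := (a + 2 * b) / 3
  have hap : a < p := by simp only [p]; linarith
  have hpq : p < q := by simp only [p, q]; linarith
  have hqb : q < b := by simp only [q]; linarith
  obtain ⟨c, d, hcd⟩ := hf p q hap hpq hqb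
  refine ⟨c, d, fun t ht => ?_⟩
  obtain ⟨c', d', hcd'⟩ := hf (min t p) (max t q) (lt_min ht.1 hap)
    ((min_le_right t p).trans_lt (hpq.trans_le (le_max_right t q))) (max_lt ht.2 hqb)
  have hp := (hcd p ⟨le_rfl, hpq.le⟩).symm.trans
    (hcd' p ⟨min_le_right t p, hpq.le.trans (le_max_right t q)⟩)
  have hq := (hcd q ⟨hpq.le, le_rfl⟩).symm.trans
    (hcd' q ⟨(min_le_right t p).trans hpq.le, le_max_right t q⟩)
  have hc : c' = c := by
    have : (c' - c) * (q - p) = 0 := by linarith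
    linarith [(mul_eq_zero.1 this).resolve_right (sub_ne_zero.2 hpq.ne')]
  have hd : d' = d := by
    rw [hc] at hp
    linarith
  rw [hcd' t ⟨min_le_left t p, le_max_left t q⟩, hc, hd]

theorem le_uscMod (h : ℝ → ℝ) (t : ℝ) : h t ≤ uscMod h t := by
  unfold uscMod
  split_ifs
  exacts [le_max_right _ _, le_rfl]

section Envelope

variable {h : ℝ → ℝ}

theorem uscMod_le_of_tendsto (hbv : BoundedVariationOn h (Icc 0 1)) {g : ℝ → ℝ} {t c : ℝ}
    (ht : t ∈ Ioo (0:ℝ) 1) (hhc : h t ≤ c) (hle : ∀ᶠ s in 𝓝[≠] t, h s ≤ g s)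
    (hg : Tendsto g (𝓝[≠] t) (𝓝 c)) : uscMod h t ≤ c := by
  have hnhds : Icc (0:ℝ) 1 ∈ 𝓝 t := Icc_mem_nhds ht.1 ht.2
  rw [← nhdsLT_sup_nhdsGT] at hle hg
  rw [uscMod, if_pos ht]
  refine max_le (max_le ?_ ?_) hhc
  · exact le_of_tendsto_of_tendsto (hbv.tendsto_leftLim_of_mem_nhds hnhds)
      (hg.mono_left le_sup_left) (hle.filter_mono le_sup_left)
  · exact le_of_tendsto_of_tendsto (hbv.tendsto_rightLim_of_mem_nhds hnhds)
      (hg.mono_left le_sup_right) (hle.filter_mono le_sup_right)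

theorem upperSemicontinuousAt_uscMod (hbv : BoundedVariationOn h (Icc 0 1)) {t : ℝ}
    (ht : t ∈ Ioo (0:ℝ) 1) : UpperSemicontinuousAt (uscMod h) t := by
  intro y hy
  obtain ⟨y', hty', hy'y⟩ := exists_between hy
  have hnhds : Icc (0:ℝ) 1 ∈ 𝓝 t := Icc_mem_nhds ht.1 ht.2
  have hmax : max (Function.leftLim h t) (Function.rightLim h t) < y' := by
    rw [uscMod, if_pos ht] at hty'
    exact (le_max_left _ _).trans_lt hty'
  have hpunct : ∀ᶠ s in 𝓝[≠] t, h s < y' := by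
    rw [← nhdsLT_sup_nhdsGT]
    exact eventually_sup.2
      ⟨(hbv.tendsto_leftLim_of_mem_nhds hnhds).eventually
          (eventually_lt_nhds ((le_max_left _ _).trans_lt hmax)),
        (hbv.tendsto_rightLim_of_mem_nhds hnhds).eventually
          (eventually_lt_nhds ((le_max_right _ _).trans_lt hmax))⟩
  -- for `s ≠ t` near `t`, a punctured neighbourhood of `s` lies in the punctured one of `t`
  filter_upwards [(eventually_nhdsWithin_iff.1 hpunct).eventually_nhds,
    Ioo_mem_nhds ht.1 ht.2] with s hs hs01
  rcases eq_or_ne s t with rfl | hst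
  · exact hy
  refine (uscMod_le_of_tendsto hbv hs01 (hs.self_of_nhds hst).le ?_
    tendsto_const_nhds).trans_lt hy'y
  filter_upwards [nhdsWithin_le_nhds hs, nhdsWithin_le_nhds (eventually_ne_nhds hst)]
    with u hu hut using (hu hut).le

theorem concaveEnvelope_le {g : ℝ → ℝ} (hg : ConcaveOn ℝ (Icc 0 1) g) (hg0 : g 0 = 0)
    (hhg : ∀ s ∈ Icc (0:ℝ) 1, h s ≤ g s) {t : ℝ} (ht : t ∈ Icc (0:ℝ) 1) :
    concaveEnvelope h t ≤ g t :=
  csInf_le ⟨h t, by rintro _ ⟨g, -, -, hhg, rfl⟩; exact hhg t ht⟩ ⟨g, hg, hg0, hhg, rfl⟩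

theorem exists_concave_majorant (hbv : BoundedVariationOn h (Icc 0 1)) (h0 : h 0 = 0) :
    ∃ g : ℝ → ℝ, ConcaveOn ℝ (Icc 0 1) g ∧ g 0 = 0 ∧ ∀ s ∈ Icc (0:ℝ) 1, h s ≤ g s := by
  set M := (eVariationOn h (Icc 0 1)).toReal
  have h0mem : (0:ℝ) ∈ Icc (0:ℝ) 1 := left_mem_Icc.2 zero_le_one
  refine ⟨update (fun _ => M) 0 0, (concaveOn_const M (convex_Icc 0 1)).update_of_mem_extremePoints
    ?_ ENNReal.toReal_nonneg, update_self .., fun s hs => ?_⟩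
  · simp [extremePoints_Icc zero_le_one]
  · rcases eq_or_ne s 0 with rfl | hs0
    · simp [h0]
    · simpa [hs0, h0] using hbv.sub_le hs h0mem

theorem le_concaveEnvelope_of_forall (hbv : BoundedVariationOn h (Icc 0 1)) (h0 : h 0 = 0)
    {t c : ℝ} (hc : ∀ g : ℝ → ℝ, ConcaveOn ℝ (Icc 0 1) g → g 0 = 0 →
      (∀ s ∈ Icc (0:ℝ) 1, h s ≤ g s) → c ≤ g t) :
    c ≤ concaveEnvelope h t := by
  obtain ⟨g, hg, hg0, hhg⟩ := exists_concave_majorant hbv h0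
  exact le_csInf ⟨g t, g, hg, hg0, hhg, rfl⟩
    (by rintro _ ⟨g, hg, hg0, hhg, rfl⟩; exact hc g hg hg0 hhg)

theorem le_concaveEnvelope (hbv : BoundedVariationOn h (Icc 0 1)) (h0 : h 0 = 0) {t : ℝ}
    (ht : t ∈ Icc (0:ℝ) 1) : h t ≤ concaveEnvelope h t :=
  le_concaveEnvelope_of_forall hbv h0 fun _ _ _ hhg => hhg t ht

theorem concaveOn_concaveEnvelope (hbv : BoundedVariationOn h (Icc 0 1)) (h0 : h 0 = 0) :
    ConcaveOn ℝ (Icc 0 1) (concaveEnvelope h) := by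
  refine ⟨convex_Icc 0 1, fun x hx y hy a b ha hb hab => ?_⟩
  refine le_concaveEnvelope_of_forall hbv h0 fun g hg hg0 hhg => ?_
  calc a • concaveEnvelope h x + b • concaveEnvelope h y ≤ a • g x + b • g y := by
        gcongr
        exacts [concaveEnvelope_le hg hg0 hhg hx, concaveEnvelope_le hg hg0 hhg hy]
    _ ≤ g (a • x + b • y) := hg.2 hx hy ha hb hab

theorem concaveEnvelope_zero (hbv : BoundedVariationOn h (Icc 0 1)) (h0 : h 0 = 0) :
    concaveEnvelope h 0 = 0 := by
  have h0mem : (0:ℝ) ∈ Icc (0:ℝ) 1 := left_mem_Icc.2 zero_le_one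
  obtain ⟨g, hg, hg0, hhg⟩ := exists_concave_majorant hbv h0
  exact le_antisymm (by simpa [hg0] using concaveEnvelope_le hg hg0 hhg h0mem)
    (by simpa [h0] using le_concaveEnvelope hbv h0 h0mem)

theorem concaveEnvelope_one (hbv : BoundedVariationOn h (Icc 0 1)) (h0 : h 0 = 0) :
    concaveEnvelope h 1 = h 1 := by
  have h1 : (1:ℝ) ∈ Icc (0:ℝ) 1 := right_mem_Icc.2 zero_le_one
  refine le_antisymm ?_ (le_concaveEnvelope hbv h0 h1)
  have hg := (concaveOn_concaveEnvelope hbv h0).update_of_mem_extremePoints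
    (by simp [extremePoints_Icc zero_le_one]) (le_concaveEnvelope hbv h0 h1)
  refine (concaveEnvelope_le hg (by simp [concaveEnvelope_zero hbv h0]) (fun s hs => ?_) h1).trans
    (by simp)
  rcases eq_or_ne s 1 with rfl | hs1
  · simp
  · simpa [hs1] using le_concaveEnvelope hbv h0 hs

theorem concaveEnvelope_le_of_concaveOn (hbv : BoundedVariationOn h (Icc 0 1)) (h0 : h 0 = 0)
    {ℓ : ℝ → ℝ} (hℓ : ConcaveOn ℝ (Icc 0 1) ℓ) (hℓ0 : 0 ≤ ℓ 0)
    (hhℓ : ∀ s ∈ Icc (0:ℝ) 1, h s ≤ ℓ s) {t : ℝ} (ht : t ∈ Icc (0:ℝ) 1) :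
    concaveEnvelope h t ≤ ℓ t :=
  (concaveEnvelope_le ((concaveOn_concaveEnvelope hbv h0).inf hℓ)
    (by simp [concaveEnvelope_zero hbv h0, hℓ0])
    (fun s hs => le_inf (le_concaveEnvelope hbv h0 hs) (hhℓ s hs)) ht).trans inf_le_right

theorem continuousOn_concaveEnvelope (hbv : BoundedVariationOn h (Icc 0 1)) (h0 : h 0 = 0) :
    ContinuousOn (concaveEnvelope h) (Ioo 0 1) :=
  ((concaveOn_concaveEnvelope hbv h0).subset Ioo_subset_Icc_self (convex_Ioo 0 1)).continuousOn
    isOpen_Ioo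

theorem uscMod_le_concaveEnvelope (hbv : BoundedVariationOn h (Icc 0 1)) (h0 : h 0 = 0)
    {t : ℝ} (ht : t ∈ Icc (0:ℝ) 1) : uscMod h t ≤ concaveEnvelope h t := by
  by_cases ht' : t ∈ Ioo (0:ℝ) 1
  · have hcont := (continuousOn_concaveEnvelope hbv h0).continuousAt (isOpen_Ioo.mem_nhds ht')
    refine uscMod_le_of_tendsto hbv ht' (le_concaveEnvelope hbv h0 ht) ?_
      (hcont.tendsto.mono_left nhdsWithin_le_nhds)
    filter_upwards [nhdsWithin_le_nhds (Icc_mem_nhds ht'.1 ht'.2)] with s hs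
      using le_concaveEnvelope hbv h0 hs
  · rw [uscMod, if_neg ht']
    exact le_concaveEnvelope hbv h0 ht

theorem setOf_uscMod_ne_concaveEnvelope (hbv : BoundedVariationOn h (Icc 0 1)) (h0 : h 0 = 0) :
    {t : ℝ | t ∈ Icc (0:ℝ) 1 ∧ uscMod h t ≠ concaveEnvelope h t} =
      {t : ℝ | t ∈ Ioo (0:ℝ) 1 ∧ uscMod h t < concaveEnvelope h t} := by
  ext t
  constructor
  · rintro ⟨ht, hne⟩
    refine ⟨⟨ht.1.lt_of_ne ?_, ht.2.lt_of_ne ?_⟩,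
      (uscMod_le_concaveEnvelope hbv h0 ht).lt_of_ne hne⟩
    · rintro rfl
      simp [uscMod, h0, concaveEnvelope_zero hbv h0] at hne
    · rintro rfl
      simp [uscMod, concaveEnvelope_one hbv h0] at hne
  · rintro ⟨ht, hlt⟩
    exact ⟨Ioo_subset_Icc_self ht, hlt.ne⟩

theorem isOpen_setOf_uscMod_lt_concaveEnvelope (hbv : BoundedVariationOn h (Icc 0 1))
    (h0 : h 0 = 0) : IsOpen {t : ℝ | t ∈ Ioo (0:ℝ) 1 ∧ uscMod h t < concaveEnvelope h t} := by
  refine isOpen_iff_mem_nhds.2 fun t ⟨ht, hlt⟩ => ?_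
  obtain ⟨y, hty, hyt⟩ := exists_between hlt
  have hcont := (continuousOn_concaveEnvelope hbv h0).continuousAt (isOpen_Ioo.mem_nhds ht)
  filter_upwards [isOpen_Ioo.mem_nhds ht, upperSemicontinuousAt_uscMod hbv ht y hty,
    hcont.eventually (eventually_gt_nhds hyt)] with s hs hs₁ hs₂ using ⟨hs, hs₁.trans hs₂⟩

theorem concaveEnvelope_le_of_uscMod_lt (hbv : BoundedVariationOn h (Icc 0 1)) (h0 : h 0 = 0)
    {x z : ℝ} {ℓ : ℝ → ℝ} (hxz : x ≤ z) (hsub : Icc x z ⊆ Ioo 0 1)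
    (hlt : ∀ s ∈ Icc x z, uscMod h s < concaveEnvelope h s)
    (hℓ : ConcaveOn ℝ (Icc 0 1) ℓ) (hℓc : ContinuousOn ℓ (Icc x z))
    (hout : ∀ s ∈ Icc (0:ℝ) 1, s ∉ Icc x z → concaveEnvelope h s ≤ ℓ s) :
    ∀ s ∈ Icc x z, concaveEnvelope h s ≤ ℓ s := by
  have husc : UpperSemicontinuousOn (fun s => uscMod h s + -ℓ s) (Icc x z) := fun s hs =>
    ((upperSemicontinuousAt_uscMod hbv (hsub hs)).upperSemicontinuousWithinAt _).add
      (hℓc.neg s hs).upperSemicontinuousWithinAt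
  obtain ⟨t, ht, hmax⟩ := husc.exists_isMaxOn (nonempty_Icc.2 hxz) isCompact_Icc
  set c := max (uscMod h t + -ℓ t) 0
  have hℓ' : ConcaveOn ℝ (Icc 0 1) fun s => ℓ s + c := hℓ.add_const c
  have hle : ∀ s ∈ Icc (0:ℝ) 1, concaveEnvelope h s ≤ ℓ s + c := by
    refine fun s hs => concaveEnvelope_le_of_concaveOn hbv h0 hℓ' ?_ (fun u hu => ?_) hs
    · have := hout 0 (left_mem_Icc.2 zero_le_one) fun h0' => (hsub h0').1.false
      rw [concaveEnvelope_zero hbv h0] at this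
      linarith [le_max_right (uscMod h t + -ℓ t) 0]
    · by_cases hu' : u ∈ Icc x z
      · linarith [le_uscMod h u, le_max_left (uscMod h t + -ℓ t) 0, isMaxOn_iff.1 hmax u hu']
      · linarith [le_concaveEnvelope hbv h0 hu, hout u hu hu', le_max_right (uscMod h t + -ℓ t) 0]
  have hc : c = 0 := by
    have h₁ := hle t (Ioo_subset_Icc_self (hsub ht))
    have h₂ := hlt t ht
    have h₃ : uscMod h t + -ℓ t < c := by linarith
    exact max_eq_right ((lt_max_iff.1 h₃).resolve_left (lt_irrefl _)).le
  intro s hs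
  simpa [hc] using hle s (Ioo_subset_Icc_self (hsub hs))

theorem exists_concaveEnvelope_eq_affine_on_Icc (hbv : BoundedVariationOn h (Icc 0 1))
    (h0 : h 0 = 0) {x z : ℝ} (hxz : x < z) (hsub : Icc x z ⊆ Ioo 0 1)
    (hlt : ∀ s ∈ Icc x z, uscMod h s < concaveEnvelope h s) :
    ∃ c d : ℝ, ∀ t ∈ Icc x z, concaveEnvelope h t = c * t + d := by
  have hφ := concaveOn_concaveEnvelope hbv h0
  have hx : x ∈ Icc (0:ℝ) 1 := Ioo_subset_Icc_self (hsub (left_mem_Icc.2 hxz.le))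
  have hz : z ∈ Icc (0:ℝ) 1 := Ioo_subset_Icc_self (hsub (right_mem_Icc.2 hxz.le))
  set m := slope (concaveEnvelope h) x z
  set d := concaveEnvelope h x - m * x
  have hline : ConcaveOn ℝ (Icc 0 1) fun s => m * s + d :=
    ((LinearMap.mul ℝ ℝ m).concaveOn (convex_Icc 0 1)).add_const d
  refine ⟨m, d, fun t ht => le_antisymm ?_ ?_⟩
  · refine concaveEnvelope_le_of_uscMod_lt hbv h0 hxz.le hsub hlt hline (by fun_prop)
      (fun s hs hs' => ?_) t ht
    have := hφ.le_add_slope_mul_sub hx hz hxz hs fun hs'' => hs' (Ioo_subset_Icc_self hs'')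
    linarith
  · linarith [hφ.add_slope_mul_sub_le hx hz hxz ht]

end Envelope

/-- the set where `ĥ` differs from the concave envelope `h*` is a union of
disjoint open intervals, and `h*` is affine on each of them. -/
theorem uscMod_ne_concaveEnvelope_structure (h : ℝ → ℝ)
    (hbv : BoundedVariationOn h (Icc 0 1)) (h0 : h 0 = 0) :
    ∃ S : Set (Set ℝ),
      (∀ A ∈ S, ∃ a b : ℝ, a < b ∧ A = Ioo a b) ∧
      S.PairwiseDisjoint id ∧
      {t : ℝ | t ∈ Icc (0:ℝ) 1 ∧ uscMod h t ≠ concaveEnvelope h t} = ⋃₀ S ∧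
      ∀ A ∈ S, ∃ c d : ℝ, ∀ t ∈ A, concaveEnvelope h t = c * t + d := by
  rw [setOf_uscMod_ne_concaveEnvelope hbv h0]
  obtain ⟨S, hIoo, hdisj, hDS⟩ :=
    (isOpen_setOf_uscMod_lt_concaveEnvelope hbv h0).exists_eq_sUnion_pairwiseDisjoint_Ioo
    ⟨0, fun t ht => ht.1.1.le⟩ ⟨1, fun t ht => ht.1.2.le⟩
  refine ⟨S, hIoo, hdisj, hDS, fun A hA => ?_⟩
  obtain ⟨a, b, hab, rfl⟩ := hIoo A hA
  have hAD := (subset_sUnion_of_mem hA).trans hDS.superset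
  refine exists_eq_affine_on_Ioo_of_forall_Icc hab fun x z hax hxz hzb => ?_
  have hsub := (Icc_subset_Ioo hax hzb).trans hAD
  exact exists_concaveEnvelope_eq_affine_on_Icc hbv h0 hxz (fun s hs => (hsub hs).1)
    fun s hs => (hsub hs).2
end

section
/- For α ∈ (0,1), p > 1, m ∈ ℝ, v > 0: sup{VaR_α(Y) : E[Y]=m, E[|Y−m|^p] ≤ v^p} = max{ES_α(Y) : E[Y]=m, E[|Y−m|^p] ≤ v^p} = m + v·α·(α^p(1−α) + (1−α)^p α)^{−1/p}, and the maximum of ES_α is attained by a two-point distribution taking value m + α·k_p with probability 1−α and m − (1−α)·k_p with probability α, where k_p = v(α^p(1−α)+(1−α)^p α)^{−1/p}. For p = 2 this equals m + v·sqrt(α/(1−α)) (the Cantelli-type bound), and the VaR supremum is not attained. -/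
/-!
The quantile function `t ↦ F⁻¹(t)` pushes Lebesgue measure on `(0,1)` forward to `μ`, so that
`ES_α` averages `F⁻¹` over `(α,1)` and obeys the Rockafellar–Uryasev bound
`ES_α ≤ T + E[(Y - T)⁺] / (1 - α)` for every `T`. The hinge `(y - T)⁺` is majorised by
`θ |y - m| ^ p + λ (y - m) + c`, built from two tangent lines of `θ |y - m| ^ p` touching at the
atoms `m - (1 - α) k_p` and `m + α k_p`; integrating against a law of `M^p(m,v)`, for the right
`T`, yields `ES_α ≤ m + α k_p`, which the two-point law on these atoms attains. Since
`VaR_α ≤ ES_α`, and the extremal two-point laws of levels `w ↑ α` have `VaR_α = m + w k_p(w)`,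
the same value is the supremum of `VaR_α`. For `p = 2`, attaining it would make Cantelli's
inequality tight; that forces the law onto two points, the lower one carrying mass `α`, and then
the `α`-quantile would be the lower point.
-/

open MeasureTheory Set Classical

/-- The moment uncertainty set `M^p(m,v)`: distributions with mean `m` and `p`-th central
moment at most `v^p`. -/
def momentSet (p m v : ℝ) : Set (Measure ℝ) :=
  {μ | IsProbabilityMeasure μ ∧ Integrable id μ ∧ (∫ x, x ∂μ) = m ∧
    Integrable (fun x => |x - m| ^ p) μ ∧ (∫ x, |x - m| ^ p ∂μ) ≤ v ^ p}

/-- Value-at-Risk: the left `α`-quantile. -/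
noncomputable def VaR (μ : Measure ℝ) (α : ℝ) : ℝ := leftQuantile μ α

/-- Expected Shortfall: `ES_α = (1/(1-α)) ∫_α^1 VaR_t dt`. -/
noncomputable def ES (μ : Measure ℝ) (α : ℝ) : ℝ :=
  (1 / (1 - α)) * ∫ t in Ioo α 1, leftQuantile μ t

open Filter Topology ProbabilityTheory

section Quantile

variable {μ : Measure ℝ} [IsProbabilityMeasure μ]

lemma leftQuantile_eq_sInf_cdf (u : ℝ) : leftQuantile μ u = sInf {x | u ≤ cdf μ x} := by
  simp only [leftQuantile, cdf_eq_real, measureReal_def]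

lemma leftQuantile_le_iff {u x : ℝ} (hu : u ∈ Ioo 0 1) :
    leftQuantile μ u ≤ x ↔ u ≤ cdf μ x := by
  rw [leftQuantile_eq_sInf_cdf]
  have hne : {x | u ≤ cdf μ x}.Nonempty :=
    ((tendsto_cdf_atTop μ).eventually (lt_mem_nhds hu.2)).exists.imp fun _ => le_of_lt
  have hbdd : BddBelow {x | u ≤ cdf μ x} := by
    obtain ⟨y, hy⟩ := ((tendsto_cdf_atBot μ).eventually (gt_mem_nhds hu.1)).exists_forall_of_atBot
    exact ⟨y, fun z hz => le_of_not_gt fun hzy => (hy z hzy.le).not_ge hz⟩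
  refine ⟨fun h => le_trans ?_ (monotone_cdf μ h), fun h => csInf_le hbdd h⟩
  -- the infimum belongs to the set, by right continuity of the cdf
  refine ge_of_tendsto (((cdf μ).right_continuous _).mono Ioi_subset_Ici_self) ?_
  filter_upwards [self_mem_nhdsWithin] with y hy
  obtain ⟨z, hz, hzy⟩ := (csInf_lt_iff hbdd hne).1 hy
  exact hz.trans (monotone_cdf μ hzy.le)

lemma monotoneOn_leftQuantile : MonotoneOn (leftQuantile μ) (Ioo 0 1) := fun _ hu _ hu' huu' =>
  (leftQuantile_le_iff hu).2 (huu'.trans ((leftQuantile_le_iff hu').1 le_rfl))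

lemma one_sub_le_measureReal_Ici_leftQuantile {α : ℝ} (hα : α ∈ Ioo 0 1) :
    1 - α ≤ μ.real (Ici (leftQuantile μ α)) := by
  set x := leftQuantile μ α
  have hlt (y : ℝ) (hy : y < x) : cdf μ y ≤ α :=
    (not_le.1 fun h => hy.not_ge ((leftQuantile_le_iff hα).2 h)).le
  have hlim : Function.leftLim (cdf μ) x ≤ α :=
    le_of_tendsto ((monotone_cdf μ).tendsto_leftLim x) (eventually_nhdsWithin_of_forall hlt)
  have hIio : μ.real (Iio x) ≤ α := by
    rw [measureReal_def, ← measure_cdf μ, (cdf μ).measure_Iio (tendsto_cdf_atBot μ), sub_zero,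
      ENNReal.toReal_ofReal']
    exact max_le hlim hα.1.le
  rw [← compl_Iio, probReal_compl_eq_one_sub measurableSet_Iio]
  linarith

lemma aemeasurable_leftQuantile : AEMeasurable (leftQuantile μ) (volume.restrict (Ioo 0 1)) :=
  aemeasurable_restrict_of_monotoneOn measurableSet_Ioo monotoneOn_leftQuantile

lemma map_leftQuantile : (volume.restrict (Ioo 0 1)).map (leftQuantile μ) = μ := by
  refine Measure.ext_of_Iic _ _ fun x => ?_
  rw [Measure.map_apply_of_aemeasurable aemeasurable_leftQuantile measurableSet_Iic,
    Measure.restrict_apply' measurableSet_Ioo, ← ofReal_cdf]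
  have hpre : leftQuantile μ ⁻¹' Iic x ∩ Ioo 0 1 = Ioo 0 1 ∩ Iic (cdf μ x) := by
    ext u
    simp only [mem_inter_iff, mem_preimage, mem_Iic]
    exact ⟨fun h => ⟨h.2, (leftQuantile_le_iff h.2).1 h.1⟩,
      fun h => ⟨(leftQuantile_le_iff h.1).2 h.2, h.1⟩⟩
  rw [hpre]
  refine le_antisymm ?_ ?_
  · calc volume (Ioo 0 1 ∩ Iic (cdf μ x)) ≤ volume (Ioc 0 (cdf μ x)) :=
          measure_mono fun u hu => mem_Ioc.2 ⟨hu.1.1, hu.2⟩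
      _ = _ := by rw [Real.volume_Ioc, sub_zero]
  · calc ENNReal.ofReal (cdf μ x) = volume (Ioo 0 (cdf μ x)) := by rw [Real.volume_Ioo, sub_zero]
      _ ≤ volume (Ioo 0 1 ∩ Iic (cdf μ x)) := measure_mono fun u hu =>
        mem_inter ⟨hu.1, hu.2.trans_le (cdf_le_one μ x)⟩ (mem_Iic.2 hu.2.le)

lemma integrableOn_comp_leftQuantile {g : ℝ → ℝ} (hg : Integrable g μ) :
    IntegrableOn (g ∘ leftQuantile μ) (Ioo 0 1) := by
  rw [← map_leftQuantile (μ := μ)] at hg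
  exact hg.comp_aemeasurable aemeasurable_leftQuantile

lemma integral_comp_leftQuantile {g : ℝ → ℝ} (hg : AEStronglyMeasurable g μ) :
    ∫ t in Ioo 0 1, g (leftQuantile μ t) = ∫ x, g x ∂μ := by
  rw [← map_leftQuantile (μ := μ)] at hg
  have h := integral_map (aemeasurable_leftQuantile (μ := μ)) hg
  rw [map_leftQuantile] at h
  exact h.symm

lemma integrableOn_leftQuantile (hμ : Integrable id μ) {α : ℝ} (hα : 0 ≤ α) :
    IntegrableOn (leftQuantile μ) (Ioo α 1) :=
  (integrableOn_comp_leftQuantile hμ).mono_set (Ioo_subset_Ioo_left hα)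

lemma VaR_le_ES (hμ : Integrable id μ) {α : ℝ} (hα : α ∈ Ioo 0 1) : VaR μ α ≤ ES μ α := by
  have h1α : 0 < 1 - α := sub_pos.2 hα.2
  have h : (1 - α) * VaR μ α ≤ ∫ t in Ioo α 1, leftQuantile μ t :=
    calc (1 - α) * VaR μ α = ∫ _ in Ioo α 1, VaR μ α := by simp [h1α.le]
      _ ≤ ∫ t in Ioo α 1, leftQuantile μ t :=
          setIntegral_mono_on (by simp [Real.volume_Ioo]) (integrableOn_leftQuantile hμ hα.1.le)
            measurableSet_Ioo fun t ht =>
              monotoneOn_leftQuantile hα ⟨hα.1.trans ht.1, ht.2⟩ ht.1.le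
  rw [ES, one_div, inv_mul_eq_div, le_div_iff₀ h1α]
  linarith

/-- The Rockafellar–Uryasev bound. -/
lemma ES_le_add_integral_max_sub (hμ : Integrable id μ) {α : ℝ} (hα : α ∈ Ioo 0 1) (T : ℝ) :
    ES μ α ≤ T + (∫ x, max (x - T) 0 ∂μ) / (1 - α) := by
  have h1α : 0 < 1 - α := sub_pos.2 hα.2
  have hφ : Integrable (fun x => max (x - T) 0) μ := (hμ.sub (integrable_const T)).pos_part
  have hφq : IntegrableOn (fun t => max (leftQuantile μ t - T) 0) (Ioo 0 1) :=
    integrableOn_comp_leftQuantile hφ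
  have hφq' := hφq.mono_set (Ioo_subset_Ioo_left hα.1.le)
  have hT : IntegrableOn (fun _ => T) (Ioo α 1) := integrableOn_const (by simp [Real.volume_Ioo])
  have h : ∫ t in Ioo α 1, leftQuantile μ t ≤ (1 - α) * T + ∫ x, max (x - T) 0 ∂μ :=
    calc ∫ t in Ioo α 1, leftQuantile μ t
        ≤ ∫ t in Ioo α 1, (T + max (leftQuantile μ t - T) 0) :=
          setIntegral_mono_on (integrableOn_leftQuantile hμ hα.1.le)
            (hT.add hφq') measurableSet_Ioo
            fun t _ => by linarith [le_max_left (leftQuantile μ t - T) 0]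
      _ = (1 - α) * T + ∫ t in Ioo α 1, max (leftQuantile μ t - T) 0 := by
          rw [integral_add hT hφq']
          simp [h1α.le]
      _ ≤ (1 - α) * T + ∫ t in Ioo 0 1, max (leftQuantile μ t - T) 0 :=
          add_le_add le_rfl (setIntegral_mono_set hφq (ae_of_all _ fun _ => le_max_right _ _)
            (Ioo_subset_Ioo_left hα.1.le).eventuallyLE)
      _ = (1 - α) * T + ∫ x, max (x - T) 0 ∂μ := by
          rw [integral_comp_leftQuantile hφ.1]
  rw [ES, one_div, inv_mul_eq_div, div_le_iff₀ h1α, add_mul, div_mul_cancel₀ _ h1α.ne']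
  linarith

end Quantile

lemma mul_rpow_sub_one_mul_le {p d : ℝ} (hp : 1 < p) (hd : 0 ≤ d) (w : ℝ) :
    p * d ^ (p - 1) * w ≤ |w| ^ p + (p - 1) * d ^ p := by
  have hp₀ : 0 < p := by linarith
  have hY := Real.young_inequality_of_nonneg (abs_nonneg w) (Real.rpow_nonneg hd (p - 1))
    (Real.HolderConjugate.conjExponent hp)
  rw [Real.conjExponent, ← Real.rpow_mul hd, mul_div_cancel₀ _ (by linarith : p - 1 ≠ 0)] at hY
  calc p * d ^ (p - 1) * w ≤ p * (|w| * d ^ (p - 1)) := by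
        rw [mul_comm |w|, ← mul_assoc]
        gcongr
        exact le_abs_self w
    _ ≤ p * (|w| ^ p / p + d ^ p / (p / (p - 1))) := by gcongr
    _ = |w| ^ p + (p - 1) * d ^ p := by field_simp

/-- Two supporting lines of `θ |w| ^ p`, at `-d₁` and at `d₂`, combine into a majorant of the
hinge `max (w - s) 0`. -/
lemma max_sub_le_of_tangents {p d₁ d₂ θ l c s : ℝ} (hp : 1 < p) (hd₁ : 0 ≤ d₁) (hd₂ : 0 ≤ d₂)
    (hθ : 0 ≤ θ) (hl : θ * (p * d₁ ^ (p - 1)) = l) (hl' : θ * (p * d₂ ^ (p - 1)) = 1 - l)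
    (hc : θ * ((p - 1) * d₁ ^ p) = c) (hs : θ * ((p - 1) * d₂ ^ p) = c + s) (w : ℝ) :
    max (w - s) 0 ≤ θ * |w| ^ p + l * w + c := by
  have h₁ := mul_le_mul_of_nonneg_left (mul_rpow_sub_one_mul_le hp hd₁ (-w)) hθ
  have h₂ := mul_le_mul_of_nonneg_left (mul_rpow_sub_one_mul_le hp hd₂ w) hθ
  rw [abs_neg] at h₁
  refine max_le ?_ ?_
  · linear_combination h₂ - w * hl' + hs
  · linear_combination h₁ + w * hl + hc

lemma integral_le_of_le_abs_rpow {p m v θ l c : ℝ} {μ : Measure ℝ} (hμ : μ ∈ momentSet p m v)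
    {g : ℝ → ℝ} (hg : Integrable g μ) (hθ : 0 ≤ θ)
    (hle : ∀ x, g x ≤ θ * |x - m| ^ p + l * (x - m) + c) :
    ∫ x, g x ∂μ ≤ θ * v ^ p + c := by
  obtain ⟨hprob, hid, hmean, hmom, hmomv⟩ := hμ
  have hlin : Integrable (fun x => l * (x - m)) μ := (hid.sub (integrable_const m)).const_mul l
  have hsum : Integrable (fun x => θ * |x - m| ^ p + l * (x - m)) μ := (hmom.const_mul θ).add hlin
  calc ∫ x, g x ∂μ ≤ ∫ x, (θ * |x - m| ^ p + l * (x - m) + c) ∂μ :=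
        integral_mono hg (hsum.add (integrable_const c)) hle
    _ = θ * ∫ x, |x - m| ^ p ∂μ + c := by
        rw [integral_add hsum (integrable_const c),
          integral_add (hmom.const_mul θ) hlin, integral_const_mul, integral_const_mul,
          integral_sub (f := fun x => x) hid (integrable_const m)]
        simp [hmean]
    _ ≤ θ * v ^ p + c := by gcongr

/-- Weak duality, with the tangency points of `max_sub_le_of_tangents` at the atoms of the law
with mass `α` at `m - d₁` and `1 - α` at `m + d₂`; `hbal` says that this law has mean `m`. -/
theorem ES_le_of_mem_momentSet {α p m v d₁ d₂ : ℝ} (hα : α ∈ Ioo 0 1) (hp : 1 < p)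
    (hd₁ : 0 < d₁) (hd₂ : 0 < d₂) (hbal : α * d₁ = (1 - α) * d₂)
    (hv : v ^ p ≤ α * d₁ ^ p + (1 - α) * d₂ ^ p) {μ : Measure ℝ} (hμ : μ ∈ momentSet p m v) :
    ES μ α ≤ m + d₂ := by
  have := hμ.1
  have h1α : 0 < 1 - α := sub_pos.2 hα.2
  have hd₁p : d₁ * d₁ ^ (p - 1) = d₁ ^ p := by
    rw [Real.rpow_sub_one hd₁.ne', mul_div_cancel₀ _ hd₁.ne']
  have hd₂p : d₂ * d₂ ^ (p - 1) = d₂ ^ p := by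
    rw [Real.rpow_sub_one hd₂.ne', mul_div_cancel₀ _ hd₂.ne']
  set X := d₁ ^ (p - 1)
  set Y := d₂ ^ (p - 1)
  have hX : 0 < X := Real.rpow_pos_of_pos hd₁ _
  have hY : 0 < Y := Real.rpow_pos_of_pos hd₂ _
  set θ := (p * (X + Y))⁻¹
  set c := θ * ((p - 1) * d₁ ^ p)
  set s := θ * ((p - 1) * d₂ ^ p) - c
  have hθ : 0 ≤ θ := by positivity
  have hθY : θ * (p * Y) = 1 - θ * (p * X) := by
    simp only [θ]
    field_simp
    ring
  have hmaj (x : ℝ) : max (x - (m + s)) 0 ≤ θ * |x - m| ^ p + θ * (p * X) * (x - m) + c := by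
    rw [← sub_sub]
    exact max_sub_le_of_tangents hp hd₁.le hd₂.le hθ rfl hθY rfl (by ring) (x - m)
  have hint :=
    integral_le_of_le_abs_rpow hμ (hμ.2.1.sub (integrable_const (m + s))).pos_part hθ hmaj
  have key : (1 - α) * s + θ * (α * d₁ ^ p + (1 - α) * d₂ ^ p) + c = (1 - α) * d₂ := by
    simp only [s, c, θ, ← hd₁p, ← hd₂p]
    field_simp
    linear_combination (p * X) * hbal
  calc ES μ α ≤ m + s + (∫ x, max (x - (m + s)) 0 ∂μ) / (1 - α) :=
        ES_le_add_integral_max_sub hμ.2.1 hα _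
    _ ≤ m + s + (θ * (α * d₁ ^ p + (1 - α) * d₂ ^ p) + c) / (1 - α) := by
        gcongr
        exact hint.trans (by gcongr)
    _ = m + d₂ := by
        field_simp
        linear_combination key

noncomputable def twoPoint (w a b : ℝ) : Measure ℝ :=
  ENNReal.ofReal (1 - w) • Measure.dirac b + ENNReal.ofReal w • Measure.dirac a

section TwoPoint

variable {w a b : ℝ}

lemma twoPoint_apply_of_mem {s : Set ℝ} (hw : w ∈ Icc 0 1) (ha : a ∈ s) (hb : b ∈ s) :
    twoPoint w a b s = 1 := by
  rw [twoPoint, Measure.add_apply, Measure.smul_apply, Measure.smul_apply,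
    Measure.dirac_apply_of_mem ha, Measure.dirac_apply_of_mem hb, smul_eq_mul, smul_eq_mul,
    mul_one, mul_one, ← ENNReal.ofReal_add (by linarith [hw.2]) hw.1]
  simp

lemma isProbabilityMeasure_twoPoint (hw : w ∈ Icc 0 1) : IsProbabilityMeasure (twoPoint w a b) :=
  ⟨twoPoint_apply_of_mem hw (mem_univ a) (mem_univ b)⟩

lemma integrable_twoPoint (f : ℝ → ℝ) : Integrable f (twoPoint w a b) :=
  ((integrable_dirac (by simp)).smul_measure ENNReal.ofReal_ne_top).add_measure
    ((integrable_dirac (by simp)).smul_measure ENNReal.ofReal_ne_top)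

lemma integral_twoPoint (hw : w ∈ Icc 0 1) (f : ℝ → ℝ) :
    ∫ x, f x ∂twoPoint w a b = (1 - w) * f b + w * f a := by
  rw [twoPoint, integral_add_measure
    ((integrable_dirac (by simp)).smul_measure ENNReal.ofReal_ne_top)
    ((integrable_dirac (by simp)).smul_measure ENNReal.ofReal_ne_top),
    integral_smul_measure, integral_smul_measure, integral_dirac, integral_dirac,
    ENNReal.toReal_ofReal (by linarith [hw.2]), ENNReal.toReal_ofReal hw.1, smul_eq_mul,
    smul_eq_mul]

lemma leftQuantile_twoPoint {t : ℝ} (hw : w ∈ Icc 0 1) (hab : a < b) (ht : t ∈ Ioo w 1) :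
    leftQuantile (twoPoint w a b) t = b := by
  have := isProbabilityMeasure_twoPoint (a := a) (b := b) hw
  have ht' : t ∈ Ioo 0 1 := ⟨hw.1.trans_lt ht.1, ht.2⟩
  refine le_antisymm ((leftQuantile_le_iff ht').2 ?_) (le_of_forall_lt fun x hx => ?_)
  · rw [cdf_eq_real, measureReal_def,
      twoPoint_apply_of_mem hw (mem_Iic.2 hab.le) (mem_Iic.2 le_rfl)]
    exact ht.2.le
  · rw [← not_le, leftQuantile_le_iff ht', not_le, cdf_eq_real, measureReal_def]
    calc (twoPoint w a b (Iic x)).toReal ≤ w := by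
          refine ENNReal.toReal_le_of_le_ofReal hw.1 ?_
          calc twoPoint w a b (Iic x) = ENNReal.ofReal w * Measure.dirac a (Iic x) := by
                simp [twoPoint, hx]
            _ ≤ ENNReal.ofReal w := mul_le_of_le_one_right' prob_le_one
      _ < t := ht.1

lemma ES_twoPoint (hw : w ∈ Ioo 0 1) (hab : a < b) : ES (twoPoint w a b) w = b := by
  have h1w := sub_pos.2 hw.2
  rw [ES, setIntegral_congr_fun measurableSet_Ioo
    fun t ht => leftQuantile_twoPoint (Ioo_subset_Icc_self hw) hab ht]
  simp [h1w.le, h1w.ne']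

lemma twoPoint_mem_momentSet {p m v k : ℝ} (hw : w ∈ Icc 0 1) (hk : 0 ≤ k)
    (hmom : w * ((1 - w) * k) ^ p + (1 - w) * (w * k) ^ p ≤ v ^ p) :
    twoPoint w (m - (1 - w) * k) (m + w * k) ∈ momentSet p m v := by
  have h1w : 0 ≤ 1 - w := sub_nonneg.2 hw.2
  refine ⟨isProbabilityMeasure_twoPoint hw, integrable_twoPoint _, ?_, integrable_twoPoint _, ?_⟩
  · rw [integral_twoPoint hw (fun x => x)]
    ring
  · rw [integral_twoPoint hw (fun x => |x - m| ^ p), add_sub_cancel_left, sub_sub_cancel_left,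
      abs_neg, abs_of_nonneg (mul_nonneg hw.1 hk), abs_of_nonneg (mul_nonneg h1w hk)]
    linarith

end TwoPoint

/-- The paper's `k_p`: the distance between the two atoms of the extremal law. -/
noncomputable def worstCaseSpread (p v α : ℝ) : ℝ :=
  v * (α ^ p * (1 - α) + (1 - α) ^ p * α) ^ (-(1 / p))

section WorstCase

variable {α p m v : ℝ}

lemma worstCaseSpread_pos (hα : α ∈ Ioo 0 1) (hv : 0 < v) : 0 < worstCaseSpread p v α := by
  have := hα.1
  have := sub_pos.2 hα.2
  unfold worstCaseSpread
  positivity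

lemma moment_worstCaseSpread (hα : α ∈ Ioo 0 1) (hp : p ≠ 0) (hv : 0 ≤ v) :
    α * ((1 - α) * worstCaseSpread p v α) ^ p + (1 - α) * (α * worstCaseSpread p v α) ^ p
      = v ^ p := by
  have h1α := sub_pos.2 hα.2
  have hB : 0 < α ^ p * (1 - α) + (1 - α) ^ p * α := by have := hα.1; positivity
  have hk : worstCaseSpread p v α ^ p = v ^ p * (α ^ p * (1 - α) + (1 - α) ^ p * α)⁻¹ := by
    rw [worstCaseSpread, Real.mul_rpow hv (Real.rpow_nonneg hB.le _), ← Real.rpow_mul hB.le,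
      neg_mul, one_div_mul_cancel hp, Real.rpow_neg_one]
  have hk₀ : 0 ≤ worstCaseSpread p v α := mul_nonneg hv (Real.rpow_nonneg hB.le _)
  rw [Real.mul_rpow h1α.le hk₀, Real.mul_rpow hα.1.le hk₀, hk]
  linear_combination v ^ p * mul_inv_cancel₀ hB.ne'

lemma worstCaseSpread_two (hα : α ∈ Ioo 0 1) :
    α * worstCaseSpread 2 v α = v * √(α / (1 - α)) := by
  have h1α := sub_pos.2 hα.2
  have hB : α ^ (2 : ℝ) * (1 - α) + (1 - α) ^ (2 : ℝ) * α = α * (1 - α) := by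
    rw [Real.rpow_two, Real.rpow_two]
    ring
  rw [worstCaseSpread, hB, Real.rpow_neg (mul_pos hα.1 h1α).le, ← Real.sqrt_eq_rpow,
    Real.sqrt_div hα.1.le, Real.sqrt_mul hα.1.le]
  have := Real.sqrt_pos.2 hα.1
  have := Real.sqrt_pos.2 h1α
  field_simp
  rw [Real.sq_sqrt hα.1.le]
  ring

lemma continuousAt_worstCaseSpread (hα : α ∈ Ioo 0 1) :
    ContinuousAt (worstCaseSpread p v) α := by
  have h1α := sub_pos.2 hα.2
  have hB : 0 < α ^ p * (1 - α) + (1 - α) ^ p * α := by have := hα.1; positivity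
  unfold worstCaseSpread
  fun_prop (disch := first | exact Or.inl hα.1.ne' | exact Or.inl h1α.ne' | exact Or.inl hB.ne')

lemma worstCase_mem_momentSet (hα : α ∈ Ioo 0 1) (hp : p ≠ 0) (hv : 0 < v) :
    twoPoint α (m - (1 - α) * worstCaseSpread p v α) (m + α * worstCaseSpread p v α)
      ∈ momentSet p m v :=
  twoPoint_mem_momentSet (Ioo_subset_Icc_self hα) (worstCaseSpread_pos hα hv).le
    (moment_worstCaseSpread hα hp hv.le).le

lemma ES_worstCase (hα : α ∈ Ioo 0 1) (hv : 0 < v) :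
    ES (twoPoint α (m - (1 - α) * worstCaseSpread p v α) (m + α * worstCaseSpread p v α)) α
      = m + α * worstCaseSpread p v α :=
  ES_twoPoint hα (by linarith [worstCaseSpread_pos (p := p) hα hv])

lemma ES_le_worstCase (hα : α ∈ Ioo 0 1) (hp : 1 < p) (hv : 0 < v) {μ : Measure ℝ}
    (hμ : μ ∈ momentSet p m v) : ES μ α ≤ m + α * worstCaseSpread p v α := by
  have hk := worstCaseSpread_pos (p := p) hα hv
  exact ES_le_of_mem_momentSet hα hp (mul_pos (sub_pos.2 hα.2) hk) (mul_pos hα.1 hk) (by ring)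
    (moment_worstCaseSpread hα (zero_lt_one.trans hp).ne' hv.le).ge hμ

theorem isGreatest_ES_momentSet (hα : α ∈ Ioo 0 1) (hp : 1 < p) (hv : 0 < v) :
    IsGreatest ((fun μ => ES μ α) '' momentSet p m v) (m + α * worstCaseSpread p v α) :=
  ⟨⟨_, worstCase_mem_momentSet hα (zero_lt_one.trans hp).ne' hv, ES_worstCase hα hv⟩,
    by rintro _ ⟨μ, hμ, rfl⟩; exact ES_le_worstCase hα hp hv hμ⟩

theorem isLUB_VaR_momentSet (hα : α ∈ Ioo 0 1) (hp : 1 < p) (hv : 0 < v) :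
    IsLUB ((fun μ => VaR μ α) '' momentSet p m v) (m + α * worstCaseSpread p v α) := by
  refine ⟨?_, fun b hb => ?_⟩
  · rintro _ ⟨μ, hμ, rfl⟩
    have := hμ.1
    exact (VaR_le_ES hμ.2.1 hα).trans (ES_le_worstCase hα hp hv hμ)
  have hcont : Tendsto (fun w => m + w * worstCaseSpread p v w) (𝓝[<] α)
      (𝓝 (m + α * worstCaseSpread p v α)) :=
    ((continuousAt_const.add (continuousAt_id.mul (continuousAt_worstCaseSpread hα))).tendsto
      ).mono_left nhdsWithin_le_nhds
  refine le_of_tendsto hcont ?_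
  filter_upwards [Ioo_mem_nhdsLT hα.1] with w hw
  have hw' : w ∈ Ioo 0 1 := ⟨hw.1, hw.2.trans hα.2⟩
  refine hb ⟨_, worstCase_mem_momentSet hw' (zero_lt_one.trans hp).ne' hv, ?_⟩
  exact leftQuantile_twoPoint (Ioo_subset_Icc_self hw')
    (by linarith [worstCaseSpread_pos (p := p) hw' hv]) ⟨hw.2, hα.2⟩

end WorstCase

section Cantelli

variable {μ : Measure ℝ} [IsProbabilityMeasure μ] {m : ℝ}

lemma indicator_Ici_le_sq {K u : ℝ} (hC : 0 ≤ K - m + u) (x : ℝ) :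
    (Ici K).indicator (fun _ => (K - m + u) ^ 2) x ≤ (x - m + u) ^ 2 := by
  by_cases hx : x ∈ Ici K
  · rw [indicator_of_mem hx]
    exact pow_le_pow_left₀ hC (by linarith [mem_Ici.1 hx]) 2
  · rw [indicator_of_notMem hx]
    positivity

lemma integrable_sub_add_sq (hid : Integrable id μ) (hsq : Integrable (fun x => (x - m) ^ 2) μ)
    (u : ℝ) : Integrable (fun x => (x - m + u) ^ 2) μ := by
  simp_rw [show ∀ x, (x - m + u) ^ 2 = (x - m) ^ 2 + 2 * u * (x - m) + u ^ 2 from fun x => by ring]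
  exact (hsq.add ((hid.sub (integrable_const m)).const_mul _)).add (integrable_const _)

lemma integral_sub_add_sq (hid : Integrable id μ) (hmean : ∫ x, x ∂μ = m)
    (hsq : Integrable (fun x => (x - m) ^ 2) μ) (u : ℝ) :
    ∫ x, (x - m + u) ^ 2 ∂μ = ∫ x, (x - m) ^ 2 ∂μ + u ^ 2 := by
  have hlin : Integrable (fun x => 2 * u * (x - m)) μ := (hid.sub (integrable_const m)).const_mul _
  have hsum : Integrable (fun x => (x - m) ^ 2 + 2 * u * (x - m)) μ := hsq.add hlin
  simp_rw [show ∀ x, (x - m + u) ^ 2 = (x - m) ^ 2 + 2 * u * (x - m) + u ^ 2 from fun x => by ring]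
  rw [integral_add hsum (integrable_const _), integral_add hsq hlin, integral_const_mul,
    integral_sub (f := fun x => x) hid (integrable_const m)]
  simp [hmean]

lemma sq_mul_measureReal_Ici_le (hid : Integrable id μ) (hmean : ∫ x, x ∂μ = m)
    (hsq : Integrable (fun x => (x - m) ^ 2) μ) {K u : ℝ} (hC : 0 ≤ K - m + u) :
    (K - m + u) ^ 2 * μ.real (Ici K) ≤ ∫ x, (x - m) ^ 2 ∂μ + u ^ 2 := by
  rw [← integral_sub_add_sq hid hmean hsq, mul_comm, ← smul_eq_mul,
    ← integral_indicator_const _ measurableSet_Ici]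
  exact integral_mono ((integrable_const _).indicator measurableSet_Ici)
    (integrable_sub_add_sq hid hsq u) (indicator_Ici_le_sq hC)

lemma measureReal_Ioi_le_of_cantelli_eq (hid : Integrable id μ) (hmean : ∫ x, x ∂μ = m)
    (hsq : Integrable (fun x => (x - m) ^ 2) μ) {K u : ℝ} (hC : 0 ≤ K - m + u)
    (heq : ∫ x, (x - m) ^ 2 ∂μ + u ^ 2 ≤ (K - m + u) ^ 2 * μ.real (Ici K)) :
    μ.real (Ioi (m - u)) ≤ μ.real (Ici K) := by
  have hind : Integrable ((Ici K).indicator fun _ => (K - m + u) ^ 2) μ :=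
    (integrable_const _).indicator measurableSet_Ici
  have hint := integrable_sub_add_sq hid hsq u
  rw [← integral_sub_add_sq hid hmean hsq, mul_comm, ← smul_eq_mul,
    ← integral_indicator_const _ measurableSet_Ici] at heq
  have hae := (integral_eq_iff_of_ae_le hind hint (ae_of_all _ (indicator_Ici_le_sq hC))).1
    (le_antisymm (integral_mono hind hint (indicator_Ici_le_sq hC)) heq)
  refine ENNReal.toReal_mono (measure_ne_top _ _) (measure_mono_ae (hae.mono fun x hx hxu => ?_))
  by_contra hxK
  rw [indicator_of_notMem (show x ∉ Ici K from hxK), eq_comm, sq_eq_zero_iff] at hx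
  exact (show m - u < x from hxu).ne' (by linarith)

end Cantelli

lemma integral_sq_le_of_mem_momentSet_two {μ : Measure ℝ} {m v : ℝ} (hμ : μ ∈ momentSet 2 m v) :
    Integrable (fun x => (x - m) ^ 2) μ ∧ ∫ x, (x - m) ^ 2 ∂μ ≤ v ^ 2 := by
  have h := hμ.2.2.2
  simp only [Real.rpow_two, sq_abs] at h
  exact h

theorem VaR_ne_of_mem_momentSet_two {μ : Measure ℝ} {α m v : ℝ} (hα : α ∈ Ioo 0 1) (hv : 0 < v)
    (hμ : μ ∈ momentSet 2 m v) : VaR μ α ≠ m + v * √(α / (1 - α)) := by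
  obtain ⟨hsq, hvar⟩ := integral_sq_le_of_mem_momentSet_two hμ
  obtain ⟨hprob, hid, hmean, -, -⟩ := hμ
  intro hK
  have h1α := sub_pos.2 hα.2
  set r := √(α / (1 - α))
  have hr : 0 < r := Real.sqrt_pos.2 (div_pos hα.1 h1α)
  have hr2 : r ^ 2 * (1 - α) = α := by
    rw [Real.sq_sqrt (div_pos hα.1 h1α).le, div_mul_cancel₀ _ h1α.ne']
  set K := VaR μ α
  set u := v / r
  have hu : 0 < u := div_pos hv hr
  have hC : 0 < K - m + u := by rw [hK]; linarith [mul_pos hv hr]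
  have hCα : (K - m + u) ^ 2 * (1 - α) = v ^ 2 + u ^ 2 := by
    rw [hK]
    simp only [u]
    field_simp
    linear_combination v ^ 2 * (r ^ 2 + 1) * hr2
  have hIci : 1 - α ≤ μ.real (Ici K) := one_sub_le_measureReal_Ici_leftQuantile hα
  have hcant := sq_mul_measureReal_Ici_le hid hmean hsq hC.le
  have hIci' : μ.real (Ici K) ≤ 1 - α :=
    le_of_mul_le_mul_left (by linarith) (pow_pos hC 2)
  have hIoi := measureReal_Ioi_le_of_cantelli_eq hid hmean hsq hC.le (by nlinarith)
  have hcdf : α ≤ cdf μ (m - u) := by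
    rw [cdf_eq_real, ← compl_Ioi, probReal_compl_eq_one_sub measurableSet_Ioi]
    linarith
  have : K ≤ m - u := (leftQuantile_le_iff hα).2 hcdf
  linarith

/-- worst-case VaR and ES over `M^p(m,v)`. The common value is
`m + v·α·(α^p(1−α)+(1−α)^p α)^{−1/p}`; the ES maximum is attained by an explicit
two-point distribution, the value reduces to `m + v·√(α/(1−α))` for `p = 2`, and for
`p = 2` the VaR supremum is not attained. -/
theorem sup_VaR_eq_sup_ES_momentSet (α p m v : ℝ)
    (hα : α ∈ Ioo (0:ℝ) 1) (hp : 1 < p) (hv : 0 < v) :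
    sSup ((fun μ => VaR μ α) '' momentSet p m v)
        = m + v * α * (α ^ p * (1 - α) + (1 - α) ^ p * α) ^ (-(1 / p)) ∧
    sSup ((fun μ => ES μ α) '' momentSet p m v)
        = m + v * α * (α ^ p * (1 - α) + (1 - α) ^ p * α) ^ (-(1 / p)) ∧
    (∃ μ ∈ momentSet p m v,
      ES μ α = m + v * α * (α ^ p * (1 - α) + (1 - α) ^ p * α) ^ (-(1 / p)) ∧
      μ = ENNReal.ofReal (1 - α) •
            Measure.dirac (m + α * (v * (α ^ p * (1 - α) + (1 - α) ^ p * α) ^ (-(1 / p))))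
        + ENNReal.ofReal α •
            Measure.dirac
              (m - (1 - α) * (v * (α ^ p * (1 - α) + (1 - α) ^ p * α) ^ (-(1 / p))))) ∧
    (p = 2 →
      m + v * α * (α ^ p * (1 - α) + (1 - α) ^ p * α) ^ (-(1 / p))
          = m + v * Real.sqrt (α / (1 - α)) ∧
      ∀ μ ∈ momentSet p m v,
        VaR μ α ≠ m + v * α * (α ^ p * (1 - α) + (1 - α) ^ p * α) ^ (-(1 / p))) := by
  have hval : m + v * α * (α ^ p * (1 - α) + (1 - α) ^ p * α) ^ (-(1 / p))
      = m + α * worstCaseSpread p v α := by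
    rw [worstCaseSpread]
    ring
  have hmem := worstCase_mem_momentSet (m := m) hα (zero_lt_one.trans hp).ne' hv
  rw [hval]
  refine ⟨(isLUB_VaR_momentSet hα hp hv).csSup_eq ⟨_, _, hmem, rfl⟩,
    (isGreatest_ES_momentSet hα hp hv).csSup_eq, ⟨_, hmem, ES_worstCase hα hv, rfl⟩,
    fun hp2 => ?_⟩
  subst hp2
  rw [add_right_inj, worstCaseSpread_two hα]
  exact ⟨rfl, fun μ hμ => VaR_ne_of_mem_momentSet_two hα hv hμ⟩
end
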